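/- arXiv:hep-th/0412162 — 2 statements merged into one kernel-verified Lean document; each statement's English description precedes it below -/
import Mathlib

section
/- For every natural number N ≥ 1, the derivation f_N of A satisfies: f_N(x) = (−1)^(N−1)·(z + z⁻¹)^N·(z − z⁻¹) + (−1)^N·N·x·y·(z + z⁻¹)^(N−1)·(z − z⁻¹), f_N(y) = (−1)^(N−1)·N·y²·(z + z⁻¹)^(N−1)·(z − z⁻¹), and f_N(z + z⁻¹) = (−1)^N·y·(z + z⁻¹)^N·(z − z⁻¹). -/
open LaurentPolynomial

noncomputable section

/-- The ring `A = ℂ[x, y, z, z⁻¹]`: Laurent polynomials in `z` over `ℂ[x, y]`. -/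
abbrev A : Type := LaurentPolynomial (MvPolynomial (Fin 2) ℂ)

/-- The variable `x`. -/
def Xv : A := C (MvPolynomial.X 0)

/-- The variable `y`. -/
def Yv : A := C (MvPolynomial.X 1)

/-- The variable `z`. -/
def Zv : A := T 1

/-- The variable `z⁻¹`. -/
def Zi : A := T (-1)

/-!
`L = k̲ + k̲⁻¹` kills `z` and `z⁻¹`, hence `s = z + z⁻¹` and `d = z - z⁻¹`, and
`L x = x s`, `L y = -y s`. So the Leibniz rule expresses `f_{n+1} = [L, f_n]` on `x`, `y`, `s`
through the values of `f_n` on them and `L` of those values, which are polynomials in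
`x, y, s, d`; the closed forms then follow by induction on `n`.
-/

namespace CommutatorTower

variable {R B : Type*} [CommRing R] [CommRing B] [Algebra R B]
  {L : Derivation R B B} {F : ℕ → Derivation R B B} {x y s d : B}

section Step

variable (hF : ∀ (n : ℕ) (a : B), F (n + 1) a = L (F n a) - F n (L a)) (n : ℕ)
include hF

theorem succ_apply_of_map_eq_mul (hLx : L x = x * s) :
    F (n + 1) x = L (F n x) - s * F n x - x * F n s := by
  rw [hF, hLx, Derivation.leibniz, smul_eq_mul, smul_eq_mul]
  ring

theorem succ_apply_of_map_eq_neg_mul (hLy : L y = -(y * s)) :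
    F (n + 1) y = L (F n y) + s * F n y + y * F n s := by
  rw [hF, hLy, map_neg, Derivation.leibniz, smul_eq_mul, smul_eq_mul]
  ring

theorem succ_apply_of_map_eq_zero (hLs : L s = 0) : F (n + 1) s = L (F n s) := by
  rw [hF, hLs, map_zero, sub_zero]

end Step

theorem succ_apply_eq_closed_form
    (hLx : L x = x * s) (hLy : L y = -(y * s)) (hLs : L s = 0) (hLd : L d = 0)
    (hF : ∀ (n : ℕ) (a : B), F (n + 1) a = L (F n a) - F n (L a))
    (h0x : F 0 x = -d) (h0y : F 0 y = 0) (h0s : F 0 s = y * d) (n : ℕ) :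
    F (n + 1) x = (-1) ^ n * s ^ (n + 1) * d + (-1) ^ (n + 1) * (n + 1) * x * y * s ^ n * d ∧
      F (n + 1) y = (-1) ^ n * (n + 1) * y ^ 2 * s ^ n * d ∧
      F (n + 1) s = (-1) ^ (n + 1) * y * s ^ (n + 1) * d := by
  induction n with
  | zero =>
    rw [succ_apply_of_map_eq_mul hF _ hLx, succ_apply_of_map_eq_neg_mul hF _ hLy,
      succ_apply_of_map_eq_zero hF _ hLs, h0x, h0y, h0s]
    simp only [map_neg, map_zero, Derivation.leibniz, hLy, hLd, smul_eq_mul]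
    refine ⟨?_, ?_, ?_⟩ <;> ring
  | succ n ih =>
    obtain ⟨ihx, ihy, ihs⟩ := ih
    rw [succ_apply_of_map_eq_mul hF (n + 1) hLx, succ_apply_of_map_eq_neg_mul hF (n + 1) hLy,
      succ_apply_of_map_eq_zero hF (n + 1) hLs, ihx, ihy, ihs]
    simp only [map_add, map_neg, Derivation.leibniz, Derivation.leibniz_pow,
      Derivation.map_natCast, Derivation.map_one_eq_zero, hLx, hLy, hLs, hLd, smul_eq_mul,
      nsmul_eq_mul]
    push_cast
    refine ⟨?_, ?_, ?_⟩ <;> ring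

end CommutatorTower

theorem Zi_mul_Zv : Zi * Zv = 1 := by
  rw [Zv, Zi, ← T_add, neg_add_cancel, T_zero]

theorem Derivation.map_Zi (D : Derivation ℂ A A) : D Zi = -(Zi ^ 2 * D Zv) := by
  rw [D.leibniz_of_mul_eq_one Zi_mul_Zv, neg_smul, smul_eq_mul]

theorem stmt3_general
    (f kk kk' : Derivation ℂ A A)
    (hfx : f Xv = -(Zv - Zi)) (hfy : f Yv = 0) (hfz : f Zv = Yv * Zv)
    (hkx : kk Xv = Xv * Zv) (hky : kk Yv = -(Yv * Zv)) (hkz : kk Zv = 0)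
    (hk'x : kk' Xv = Xv * Zi) (hk'y : kk' Yv = -(Yv * Zi)) (hk'z : kk' Zv = 0)
    (F : ℕ → Derivation ℂ A A) (hF0 : F 0 = f)
    (hFs : ∀ (n : ℕ) (a : A), F (n + 1) a = (kk + kk') (F n a) - F n ((kk + kk') a))
    (N : ℕ) (hN : 1 ≤ N) :
    F N Xv = (-1 : A) ^ (N - 1) * (Zv + Zi) ^ N * (Zv - Zi)
        + (-1 : A) ^ N * (N : A) * Xv * Yv * (Zv + Zi) ^ (N - 1) * (Zv - Zi) ∧
      F N Yv = (-1 : A) ^ (N - 1) * (N : A) * Yv ^ 2 * (Zv + Zi) ^ (N - 1) * (Zv - Zi) ∧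
      F N (Zv + Zi) = (-1 : A) ^ N * Yv * (Zv + Zi) ^ N * (Zv - Zi) := by
  have hLZv : (kk + kk') Zv = 0 := by rw [Derivation.add_apply, hkz, hk'z, add_zero]
  have hLZi : (kk + kk') Zi = 0 := by rw [Derivation.map_Zi, hLZv, mul_zero, neg_zero]
  have hfZi : f Zi = -(Yv * Zi) := by
    rw [f.map_Zi, hfz]
    linear_combination (-(Yv * Zi)) * Zi_mul_Zv
  obtain ⟨n, rfl⟩ := Nat.exists_eq_add_of_le' hN
  simpa only [Nat.add_sub_cancel, Nat.cast_succ] using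
    CommutatorTower.succ_apply_eq_closed_form (d := Zv - Zi)
      (by rw [Derivation.add_apply, hkx, hk'x]; ring)
      (by rw [Derivation.add_apply, hky, hk'y]; ring)
      (by rw [map_add, hLZv, hLZi, add_zero]) (by rw [map_sub, hLZv, hLZi, sub_zero]) hFs
      (by rw [hF0, hfx]) (by rw [hF0, hfy]) (by rw [hF0, map_add, hfz, hfZi]; ring) n

/-- Values of the derivation `f_N` on `x`, `y` and `z + z⁻¹`, for `N ≥ 1`. -/
theorem stmt3
    (e f kk kk' : Derivation ℂ A A)
    (hex : e Xv = 0) (hey : e Yv = Zv - Zi) (hez : e Zv = -(Xv * Zv))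
    (hfx : f Xv = -(Zv - Zi)) (hfy : f Yv = 0) (hfz : f Zv = Yv * Zv)
    (hkx : kk Xv = Xv * Zv) (hky : kk Yv = -(Yv * Zv)) (hkz : kk Zv = 0)
    (hk'x : kk' Xv = Xv * Zi) (hk'y : kk' Yv = -(Yv * Zi)) (hk'z : kk' Zv = 0)
    (E F : ℕ → Derivation ℂ A A) (hE0 : E 0 = e) (hF0 : F 0 = f)
    (hEs : ∀ (n : ℕ) (a : A), E (n + 1) a = (kk + kk') (E n a) - E n ((kk + kk') a))
    (hFs : ∀ (n : ℕ) (a : A), F (n + 1) a = (kk + kk') (F n a) - F n ((kk + kk') a))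
    (N : ℕ) (hN : 1 ≤ N) :
    F N Xv = (-1 : A) ^ (N - 1) * (Zv + Zi) ^ N * (Zv - Zi)
        + (-1 : A) ^ N * (N : A) * Xv * Yv * (Zv + Zi) ^ (N - 1) * (Zv - Zi) ∧
      F N Yv = (-1 : A) ^ (N - 1) * (N : A) * Yv ^ 2 * (Zv + Zi) ^ (N - 1) * (Zv - Zi) ∧
      F N (Zv + Zi) = (-1 : A) ^ N * Yv * (Zv + Zi) ^ N * (Zv - Zi) :=
  stmt3_general f kk kk' hfx hfy hfz hkx hky hkz hk'x hk'y hk'z F hF0 hFs N hN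
end
end

section
/- For every natural number N, the derivation e_N annihilates the element z + z⁻¹ + xy of A, i.e. e_N(z + z⁻¹ + xy) = 0. -/
open LaurentPolynomial

/-
Write `w = z + z⁻¹ + xy` and `L = k̲ + k̲⁻¹`. A direct computation on generators gives `e w = 0`
and `L w = 0`. Then `e_{N+1} w = L (e_N w) - e_N (L w)` vanishes as soon as `e_N w` does, so
induction on `N` finishes the proof.
-/

noncomputable section

theorem iterated_commutator_apply_eq_zero {F M : Type*} [AddGroup M] [FunLike F M M]
    [ZeroHomClass F M M] (L : F) (E : ℕ → F)
    (hE : ∀ (n : ℕ) (a : M), E (n + 1) a = L (E n a) - E n (L a))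
    {w : M} (hE0 : E 0 w = 0) (hL : L w = 0) (n : ℕ) : E n w = 0 := by
  induction n with
  | zero => exact hE0
  | succ n ih => rw [hE, ih, hL, map_zero, map_zero, sub_zero]

theorem Zv_mul_Zi : Zv * Zi = 1 := by
  rw [Zv, Zi, ← T_add, add_neg_cancel, T_zero]

theorem Derivation.apply_Zi (d : Derivation ℂ A A) : d Zi = -(Zi ^ 2 * d Zv) := by
  let _ : Invertible Zv := ⟨Zi, by rw [mul_comm, Zv_mul_Zi], Zv_mul_Zi⟩
  have h := d.leibniz_invOf Zv
  rw [invOf_eq_right_inv Zv_mul_Zi, smul_eq_mul] at h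
  linear_combination h

theorem Derivation.apply_Zv_add_Zi_add_Xv_mul_Yv (d : Derivation ℂ A A) :
    d (Zv + Zi + Xv * Yv) = (1 - Zi ^ 2) * d Zv + Yv * d Xv + Xv * d Yv := by
  rw [map_add, map_add, d.leibniz, d.apply_Zi, smul_eq_mul, smul_eq_mul]
  ring

theorem stmt4_general
    (e kk kk' : Derivation ℂ A A)
    (hex : e Xv = 0) (hey : e Yv = Zv - Zi) (hez : e Zv = -(Xv * Zv))
    (hkx : kk Xv = Xv * Zv) (hky : kk Yv = -(Yv * Zv)) (hkz : kk Zv = 0)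
    (hk'x : kk' Xv = Xv * Zi) (hk'y : kk' Yv = -(Yv * Zi)) (hk'z : kk' Zv = 0)
    (E : ℕ → Derivation ℂ A A) (hE0 : E 0 = e)
    (hEs : ∀ (n : ℕ) (a : A), E (n + 1) a = (kk + kk') (E n a) - E n ((kk + kk') a))
    (N : ℕ) :
    E N (Zv + Zi + Xv * Yv) = 0 := by
  have he : e (Zv + Zi + Xv * Yv) = 0 := by
    rw [e.apply_Zv_add_Zi_add_Xv_mul_Yv, hex, hey, hez]
    linear_combination (Xv * Zi) * Zv_mul_Zi
  have hL : (kk + kk') (Zv + Zi + Xv * Yv) = 0 := by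
    rw [Derivation.apply_Zv_add_Zi_add_Xv_mul_Yv, Derivation.add_apply, Derivation.add_apply,
      Derivation.add_apply, hkx, hky, hkz, hk'x, hk'y, hk'z]
    ring
  exact iterated_commutator_apply_eq_zero (kk + kk') E hEs (hE0 ▸ he) hL N

/-- Every derivation `e_N` annihilates `z + z⁻¹ + xy`. -/
theorem stmt4
    (e f kk kk' : Derivation ℂ A A)
    (hex : e Xv = 0) (hey : e Yv = Zv - Zi) (hez : e Zv = -(Xv * Zv))
    (hfx : f Xv = -(Zv - Zi)) (hfy : f Yv = 0) (hfz : f Zv = Yv * Zv)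
    (hkx : kk Xv = Xv * Zv) (hky : kk Yv = -(Yv * Zv)) (hkz : kk Zv = 0)
    (hk'x : kk' Xv = Xv * Zi) (hk'y : kk' Yv = -(Yv * Zi)) (hk'z : kk' Zv = 0)
    (E F : ℕ → Derivation ℂ A A) (hE0 : E 0 = e) (hF0 : F 0 = f)
    (hEs : ∀ (n : ℕ) (a : A), E (n + 1) a = (kk + kk') (E n a) - E n ((kk + kk') a))
    (hFs : ∀ (n : ℕ) (a : A), F (n + 1) a = (kk + kk') (F n a) - F n ((kk + kk') a))
    (N : ℕ) :
    E N (Zv + Zi + Xv * Yv) = 0 :=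
  stmt4_general e kk kk' hex hey hez hkx hky hkz hk'x hk'y hk'z E hE0 hEs N
end
end
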